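/- arXiv:1509.01641 — 2 statements merged into one kernel-verified Lean document; each statement's English description precedes it below -/
import Mathlib

section
/- Under the same hypotheses (Ω bounded strictly convex, φ a C² defining function, f = -log φ), if x_k, y_k ∈ Ω with x_k → x₀ ∈ ∂Ω, y_k → y₀ ∈ ∂Ω and x₀ ≠ y₀, then E_f(x_k, y_k) → +∞. -/
noncomputable def segEf {n : ℕ} (f : EuclideanSpace ℝ (Fin n) → ℝ)
    (x y : EuclideanSpace ℝ (Fin n)) : ℝ :=
  ∫ s in (0:ℝ)..‖y - x‖,
    iteratedFDeriv ℝ 2 f (x + s • (‖y - x‖⁻¹ • (y - x)))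
      ![‖y - x‖⁻¹ • (y - x), ‖y - x‖⁻¹ • (y - x)]

/-!
With `u = (y - x) / ‖y - x‖`, the fundamental theorem of calculus along the segment gives
`E_f(x, y) = ∂ᵤf(y) - ∂ᵤf(x) = φ(x)⁻¹ dφ(x) u + φ(y)⁻¹ dφ(y) (-u)` for `f = -log φ`.
At a boundary point `p`, `φ` attains its minimum `0` over the convex set `Ω̄`, so
`dφ(p) (q - p) ≥ 0` for `q ∈ Ω̄`; equality is excluded by strict convexity, since then `φ` would
have vanishing first and negative second derivative along `[p, q]` and would turn negative.
Hence each term is a quantity with positive limit divided by `φ → 0⁺`.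
-/

open Filter Set Topology

theorem nonneg_of_isMinOn_Icc_of_deriv_nonpos {g g' : ℝ → ℝ} {a b Q : ℝ} (hab : a < b)
    (hmin : IsMinOn g (Icc a b) a) (hg : ∀ t ∈ Ico a b, HasDerivAt g (g' t) t)
    (hg'a : g' a ≤ 0) (hQ : HasDerivAt g' Q a) : 0 ≤ Q := by
  by_contra! hQneg
  -- `Q < 0` makes `g'` negative just right of `a`, so by the mean value theorem `g` drops
  -- below `g a` there.
  have hneg : ∀ᶠ t in 𝓝[>] a, g' t < 0 ∧ t < b := by
    have hslope := (hasDerivAt_iff_tendsto_slope.1 hQ).mono_left (nhdsGT_le_nhdsNE a)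
    filter_upwards [hslope.eventually_lt_const hQneg, self_mem_nhdsWithin,
      Ioo_mem_nhdsGT hab] with t hst (hat : a < t) htb
    rw [slope_def_field, div_lt_iff₀ (sub_pos.2 hat)] at hst
    exact ⟨by linarith, htb.2⟩
  obtain ⟨c, hac : a < c, hsub⟩ := mem_nhdsGT_iff_exists_Ioo_subset.1 hneg
  obtain ⟨t, ht⟩ := nonempty_Ioo.2 hac
  have htb : t < b := (hsub ht).2
  obtain ⟨s, hs, hgs⟩ := exists_hasDerivAt_eq_slope g g' ht.1
    (fun s hs => (hg s ⟨hs.1, hs.2.trans_lt htb⟩).continuousAt.continuousWithinAt)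
    (fun s hs => hg s ⟨hs.1.le, hs.2.trans htb⟩)
  have hslope_nonneg : 0 ≤ (g t - g a) / (t - a) :=
    div_nonneg (sub_nonneg.2 (hmin ⟨ht.1.le, htb.le⟩)) (sub_nonneg.2 ht.1.le)
  linarith [(hsub ⟨hs.1, hs.2.trans ht.2⟩).1]

section LineDerivatives

variable {E F : Type*} [NormedAddCommGroup E] [NormedSpace ℝ E]
  [NormedAddCommGroup F] [NormedSpace ℝ F]

theorem DifferentiableAt.hasDerivAt_comp_add_smul {f : E → F} {x v : E} {t : ℝ}
    (hf : DifferentiableAt ℝ f (x + t • v)) :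
    HasDerivAt (fun s : ℝ => f (x + s • v)) (fderiv ℝ f (x + t • v) v) t :=
  hf.hasFDerivAt.comp_hasDerivAt t (by simpa using ((hasDerivAt_id t).smul_const v).const_add x)

theorem DifferentiableAt.hasDerivAt_fderiv_comp_add_smul {f : E → F} {x v : E} {t : ℝ}
    (hf : DifferentiableAt ℝ (fderiv ℝ f) (x + t • v)) :
    HasDerivAt (fun s : ℝ => fderiv ℝ f (x + s • v) v)
      (iteratedFDeriv ℝ 2 f (x + t • v) ![v, v]) t := by
  simpa [iteratedFDeriv_two_apply, Function.comp_def] using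
    (ContinuousLinearMap.apply ℝ F v).hasFDerivAt.comp_hasDerivAt t hf.hasDerivAt_comp_add_smul

theorem integral_iteratedFDeriv_two_comp_add_smul [CompleteSpace F] {f : E → F} {x v : E}
    {L : ℝ} (hL : 0 ≤ L) (hf : ∀ s ∈ Icc 0 L, ContDiffAt ℝ 2 f (x + s • v)) :
    ∫ s in 0..L, iteratedFDeriv ℝ 2 f (x + s • v) ![v, v]
      = fderiv ℝ f (x + L • v) v - fderiv ℝ f x v := by
  rw [← uIcc_of_le hL] at hf
  have hderiv : ∀ s ∈ uIcc 0 L, HasDerivAt (fun s => fderiv ℝ f (x + s • v) v)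
      (iteratedFDeriv ℝ 2 f (x + s • v) ![v, v]) s := fun s hs =>
    (((hf s hs).fderiv_right (m := 1) (by norm_num)).differentiableAt
      (by norm_num)).hasDerivAt_fderiv_comp_add_smul
  have hcont : ContinuousOn (fun s => iteratedFDeriv ℝ 2 f (x + s • v) ![v, v]) (uIcc 0 L) :=
    fun s hs => ((continuous_eval_const ![v, v]).continuousAt.comp
      (((hf s hs).continuousAt_iteratedFDeriv le_rfl).comp (f := fun s : ℝ => x + s • v)
        (by fun_prop))).continuousWithinAt
  rw [intervalIntegral.integral_eq_sub_of_hasDerivAt hderiv hcont.intervalIntegrable]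
  simp

theorem ContDiffOn.continuousOn_fderiv_of_differentiableAt {f : E → F} {s : Set E}
    {n : WithTop ℕ∞} (hf : ContDiffOn ℝ n f s) (hn : 1 ≤ n) (hs : UniqueDiffOn ℝ s)
    (hd : ∀ z ∈ s, DifferentiableAt ℝ f z) : ContinuousOn (fderiv ℝ f) s :=
  (hf.continuousOn_fderivWithin hs hn).congr fun z hz => ((hd z hz).fderivWithin (hs z hz)).symm

theorem fderiv_pos_of_isMinOn {K : Set E} (hK : Convex ℝ K) {φ : E → ℝ} {p q : E}
    (hmin : IsMinOn φ K p) (hd : ∀ z ∈ K, DifferentiableAt ℝ φ z) (hp : p ∈ K) (hq : q ∈ K)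
    (h2 : fderiv ℝ φ p (q - p) = 0 → iteratedFDeriv ℝ 2 φ p ![q - p, q - p] < 0) :
    0 < fderiv ℝ φ p (q - p) := by
  have hfirst : 0 ≤ fderiv ℝ φ p (q - p) :=
    hmin.localize.hasFDerivWithinAt_nonneg (hd p hp).hasFDerivAt.hasFDerivWithinAt
      (sub_mem_posTangentConeAt_of_segment_subset (hK.segment_subset hp hq))
  refine hfirst.lt_of_ne' fun hzero => ?_
  have hQ := h2 hzero
  -- otherwise the junk value `fderiv ℝ (fderiv ℝ φ) p = 0` would make the second derivative vanish
  have hd2 : DifferentiableAt ℝ (fderiv ℝ φ) p := by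
    by_contra hnd
    simp [iteratedFDeriv_two_apply, fderiv_zero_of_not_differentiableAt hnd] at hQ
  have hseg : ∀ t ∈ Icc (0 : ℝ) 1, p + t • (q - p) ∈ K := fun t ht =>
    hK.add_smul_sub_mem hp hq ht
  refine (nonneg_of_isMinOn_Icc_of_deriv_nonpos zero_lt_one
    (g := fun t => φ (p + t • (q - p))) (fun t ht => ?_)
    (fun t ht => (hd _ (hseg t (Ico_subset_Icc_self ht))).hasDerivAt_comp_add_smul)
    (by simpa using hzero.le)
    ((by simpa using hd2 : DifferentiableAt ℝ (fderiv ℝ φ) (p + (0 : ℝ) • (q - p)))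
      |>.hasDerivAt_fderiv_comp_add_smul)).not_gt (by simpa using hQ)
  simpa using hmin (hseg t ht)

end LineDerivatives

theorem tendsto_inv_mul_fderiv_atTop {E ι : Type*} [NormedAddCommGroup E] [NormedSpace ℝ E]
    {l : Filter ι} {K : Set E} {φ : E → ℝ} (hφ : ContinuousOn φ K)
    (hDφ : ContinuousOn (fderiv ℝ φ) K) {z u : ι → E} {z₀ v : E} (hzK : ∀ i, z i ∈ K)
    (hzpos : ∀ i, 0 < φ (z i)) (hz : Tendsto z l (𝓝 z₀)) (hz₀ : z₀ ∈ K) (hφz₀ : φ z₀ = 0)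
    (hu : Tendsto u l (𝓝 v)) (hv : 0 < fderiv ℝ φ z₀ v) :
    Tendsto (fun i => (φ (z i))⁻¹ * fderiv ℝ φ (z i) (u i)) l atTop := by
  have hzK' : Tendsto z l (𝓝[K] z₀) := tendsto_nhdsWithin_iff.2 ⟨hz, .of_forall hzK⟩
  have hφz : Tendsto (fun i => φ (z i)) l (𝓝[>] 0) := by
    refine tendsto_nhdsWithin_iff.2 ⟨?_, .of_forall hzpos⟩
    simpa [hφz₀, Function.comp_def] using (hφ z₀ hz₀).tendsto.comp hzK'
  have hDz : Tendsto (fun i => fderiv ℝ φ (z i) (u i)) l (𝓝 (fderiv ℝ φ z₀ v)) :=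
    (isBoundedBilinearMap_apply.continuous.tendsto _).comp
      (((hDφ z₀ hz₀).tendsto.comp hzK').prodMk_nhds hu)
  exact (tendsto_inv_nhdsGT_zero.comp hφz).atTop_mul_pos hv hDz

theorem isMinOn_closure_of_frontier {X : Type*} [TopologicalSpace X] {s : Set X} {φ : X → ℝ}
    (hnonneg : ∀ z ∈ s, 0 ≤ φ z) (h0 : ∀ z ∈ frontier s, φ z = 0) {p : X}
    (hp : p ∈ frontier s) : IsMinOn φ (closure s) p := fun z hz => by
  rw [closure_eq_self_union_frontier] at hz
  rcases hz with hz | hz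
  · exact (h0 p hp).trans_le (hnonneg z hz)
  · exact ((h0 p hp).trans (h0 z hz).symm).le

section SegEf

variable {n : ℕ}

theorem segEf_eq_fderiv_sub {f : EuclideanSpace ℝ (Fin n) → ℝ} {x y : EuclideanSpace ℝ (Fin n)}
    (hf : ∀ z ∈ segment ℝ x y, ContDiffAt ℝ 2 f z) :
    segEf f x y = fderiv ℝ f y (‖y - x‖⁻¹ • (y - x)) - fderiv ℝ f x (‖y - x‖⁻¹ • (y - x)) := by
  have hend : x + ‖y - x‖ • (‖y - x‖⁻¹ • (y - x)) = y := by
    rcases eq_or_ne (y - x) 0 with h | h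
    · rw [sub_eq_zero] at h
      simp [h]
    · rw [smul_inv_smul₀ (norm_ne_zero_iff.2 h)]
      abel
  rw [segEf, integral_iteratedFDeriv_two_comp_add_smul (norm_nonneg _), hend]
  intro s hs
  apply hf
  rw [segment_eq_image']
  refine ⟨s / ‖y - x‖,
    ⟨div_nonneg hs.1 (norm_nonneg _), div_le_one_of_le₀ hs.2 (norm_nonneg _)⟩, ?_⟩
  rw [smul_smul, div_eq_mul_inv]

theorem segEf_neg_log {φ : EuclideanSpace ℝ (Fin n) → ℝ} {x y : EuclideanSpace ℝ (Fin n)}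
    (hφ : ∀ z ∈ segment ℝ x y, ContDiffAt ℝ 2 φ z) (hφ0 : ∀ z ∈ segment ℝ x y, φ z ≠ 0) :
    segEf (fun z => -Real.log (φ z)) x y
      = (φ x)⁻¹ * fderiv ℝ φ x (‖y - x‖⁻¹ • (y - x))
        + (φ y)⁻¹ * fderiv ℝ φ y (-(‖y - x‖⁻¹ • (y - x))) := by
  have hfderiv : ∀ z ∈ segment ℝ x y,
      fderiv ℝ (fun z => -Real.log (φ z)) z = -((φ z)⁻¹ • fderiv ℝ φ z) := fun z hz =>
    (((hφ z hz).differentiableAt (by norm_num)).hasFDerivAt.log (hφ0 z hz)).neg.fderiv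
  rw [segEf_eq_fderiv_sub (f := fun z => -Real.log (φ z))
      fun z hz => ((Real.contDiffAt_log.2 (hφ0 z hz)).comp z (hφ z hz)).neg,
    hfderiv x (left_mem_segment ℝ x y), hfderiv y (right_mem_segment ℝ x y)]
  simp only [neg_apply, smul_apply, smul_eq_mul, map_neg]
  ring

end SegEf

theorem stmt12_general {n : ℕ} (Ω : Set (EuclideanSpace ℝ (Fin n)))
    (hopen : IsOpen Ω) (hconv : Convex ℝ Ω)
    (φ : EuclideanSpace ℝ (Fin n) → ℝ)
    (hφC2 : ContDiffOn ℝ 2 φ (closure Ω))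
    (hφpos : ∀ x ∈ Ω, 0 < φ x)
    (hφ0 : ∀ x ∈ frontier Ω, φ x = 0)
    (hφν : ∀ x ∈ frontier Ω, fderiv ℝ φ x ≠ 0)
    (hstrict : ∀ x ∈ frontier Ω, ∀ X : EuclideanSpace ℝ (Fin n), X ≠ 0 →
      fderiv ℝ φ x X = 0 → iteratedFDeriv ℝ 2 φ x ![X, X] < 0)
    (xk yk : ℕ → EuclideanSpace ℝ (Fin n))
    (hxk : ∀ k, xk k ∈ Ω) (hyk : ∀ k, yk k ∈ Ω)
    (x₀ y₀ : EuclideanSpace ℝ (Fin n))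
    (hx₀ : x₀ ∈ frontier Ω) (hy₀ : y₀ ∈ frontier Ω) (hne : x₀ ≠ y₀)
    (hxlim : Filter.Tendsto xk Filter.atTop (nhds x₀))
    (hylim : Filter.Tendsto yk Filter.atTop (nhds y₀)) :
    Filter.Tendsto (fun k => segEf (fun z => -Real.log (φ z)) (xk k) (yk k))
      Filter.atTop Filter.atTop := by
  have hφΩ : ∀ z ∈ Ω, ContDiffAt ℝ 2 φ z := fun z hz =>
    hφC2.contDiffAt (mem_of_superset (hopen.mem_nhds hz) subset_closure)
  have hdiff : ∀ z ∈ closure Ω, DifferentiableAt ℝ φ z := fun z hz => by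
    rw [closure_eq_self_union_frontier] at hz
    rcases hz with hz | hz
    · exact (hφΩ z hz).differentiableAt (by norm_num)
    · by_contra hnd
      exact hφν z hz (fderiv_zero_of_not_differentiableAt hnd)
  have hUD : UniqueDiffOn ℝ (closure Ω) :=
    uniqueDiffOn_convex hconv.closure
      ⟨xk 0, interior_mono subset_closure (hopen.interior_eq.symm ▸ hxk 0)⟩
  have hDφ := hφC2.continuousOn_fderiv_of_differentiableAt (by norm_num) hUD hdiff
  have hblowup : ∀ p ∈ frontier Ω, ∀ q ∈ closure Ω, p ≠ q →
      ∀ z u : ℕ → EuclideanSpace ℝ (Fin n), (∀ k, z k ∈ Ω) → Tendsto z atTop (𝓝 p) →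
      Tendsto u atTop (𝓝 (‖q - p‖⁻¹ • (q - p))) →
      Tendsto (fun k => (φ (z k))⁻¹ * fderiv ℝ φ (z k) (u k)) atTop atTop := by
    intro p hp q hq hpq z u hz hzp hu
    have hqp : q - p ≠ 0 := sub_ne_zero.2 hpq.symm
    have hpcl := frontier_subset_closure hp
    refine tendsto_inv_mul_fderiv_atTop hφC2.continuousOn hDφ (fun k => subset_closure (hz k))
      (fun k => hφpos _ (hz k)) hzp hpcl (hφ0 p hp) hu ?_
    rw [map_smul, smul_eq_mul]
    exact mul_pos (inv_pos.2 (norm_pos_iff.2 hqp)) <| fderiv_pos_of_isMinOn hconv.closure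
      (isMinOn_closure_of_frontier (fun z hz => (hφpos z hz).le) hφ0 hp) hdiff hpcl hq
      (hstrict p hp _ hqp)
  have hu : Tendsto (fun k => ‖yk k - xk k‖⁻¹ • (yk k - xk k)) atTop
      (𝓝 (‖y₀ - x₀‖⁻¹ • (y₀ - x₀))) :=
    ((hylim.sub hxlim).norm.inv₀ (norm_ne_zero_iff.2 (sub_ne_zero.2 hne.symm))).smul
      (hylim.sub hxlim)
  have hu' : Tendsto (fun k => -(‖yk k - xk k‖⁻¹ • (yk k - xk k))) atTop
      (𝓝 (‖x₀ - y₀‖⁻¹ • (x₀ - y₀))) := by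
    simpa only [← smul_neg, neg_sub, norm_sub_rev y₀] using hu.neg
  have hseg : ∀ k, segment ℝ (xk k) (yk k) ⊆ Ω := fun k => hconv.segment_subset (hxk k) (hyk k)
  refine ((hblowup x₀ hx₀ y₀ (frontier_subset_closure hy₀) hne xk _ hxk hxlim hu).atTop_add_atTop
    (hblowup y₀ hy₀ x₀ (frontier_subset_closure hx₀) hne.symm yk _ hyk hylim hu')).congr
    fun k => (segEf_neg_log (fun z hz => hφΩ z (hseg k hz))
      (fun z hz => (hφpos z (hseg k hz)).ne')).symm

theorem stmt12 {n : ℕ} (Ω : Set (EuclideanSpace ℝ (Fin n)))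
    (hopen : IsOpen Ω) (hbd : Bornology.IsBounded Ω) (hconv : Convex ℝ Ω)
    (φ : EuclideanSpace ℝ (Fin n) → ℝ)
    (hφC2 : ContDiffOn ℝ 2 φ (closure Ω))
    (hφpos : ∀ x ∈ Ω, 0 < φ x)
    (hφ0 : ∀ x ∈ frontier Ω, φ x = 0)
    (hφν : ∀ x ∈ frontier Ω, fderiv ℝ φ x ≠ 0)
    (hstrict : ∀ x ∈ frontier Ω, ∀ X : EuclideanSpace ℝ (Fin n), X ≠ 0 →
      fderiv ℝ φ x X = 0 → iteratedFDeriv ℝ 2 φ x ![X, X] < 0)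
    (xk yk : ℕ → EuclideanSpace ℝ (Fin n))
    (hxk : ∀ k, xk k ∈ Ω) (hyk : ∀ k, yk k ∈ Ω)
    (x₀ y₀ : EuclideanSpace ℝ (Fin n))
    (hx₀ : x₀ ∈ frontier Ω) (hy₀ : y₀ ∈ frontier Ω) (hne : x₀ ≠ y₀)
    (hxlim : Filter.Tendsto xk Filter.atTop (nhds x₀))
    (hylim : Filter.Tendsto yk Filter.atTop (nhds y₀)) :
    Filter.Tendsto (fun k => segEf (fun z => -Real.log (φ z)) (xk k) (yk k))
      Filter.atTop Filter.atTop :=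
  stmt12_general Ω hopen hconv φ hφC2 hφpos hφ0 hφν hstrict xk yk hxk hyk x₀ y₀ hx₀ hy₀ hne hxlim
    hylim
end

section
/- Under the same hypotheses (Ω bounded strictly convex, φ a C² defining function, f = -log φ), if x_k, y_k ∈ Ω with x_k → x₀ and y_k → x₀ for some x₀ ∈ ∂Ω, then lim inf E_f(x_k, y_k) ≥ 0; moreover if x_k ≠ y_k for large k, then E_f(x_k,y_k)/‖y_k-x_k‖ → +∞. -/
open Filter Topology Set Metric

theorem Real.liminf_nonneg_of_eventually_nonneg {ι : Type*} {l : Filter ι} {u : ι → ℝ}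
    (h : ∀ᶠ i in l, 0 ≤ u i) : 0 ≤ liminf u l := by
  rw [liminf_eq]
  by_cases hbdd : BddAbove {a | ∀ᶠ i in l, a ≤ u i}
  · exact le_csSup hbdd h
  · rw [Real.sSup_of_not_bddAbove hbdd]

theorem tendsto_sq_div_sub_div_atTop {ι : Type*} {l : Filter ι} {p H φ : ι → ℝ} {p₀ H₀ : ℝ}
    (hp : Tendsto p l (𝓝 p₀)) (hH : Tendsto H l (𝓝 H₀)) (hφ : Tendsto φ l (𝓝[>] 0))
    (hH₀ : p₀ = 0 → H₀ < 0) :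
    Tendsto (fun i => (p i ^ 2 / φ i - H i) / φ i) l atTop := by
  have hinv : Tendsto (fun i => (φ i)⁻¹) l atTop := hφ.inv_tendsto_nhdsGT_zero
  simp only [div_eq_mul_inv]
  rcases eq_or_ne p₀ 0 with hp₀ | hp₀
  · refine tendsto_atTop_mono' l ?_ (hH.neg.pos_mul_atTop (neg_pos.2 (hH₀ hp₀)) hinv)
    filter_upwards [hφ self_mem_nhdsWithin] with i (hi : 0 < φ i)
    have hpφ : 0 ≤ p i ^ 2 * (φ i)⁻¹ := by positivity
    exact mul_le_mul_of_nonneg_right (by linarith) (inv_pos.2 hi).le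
  · exact (((hp.pow 2).pos_mul_atTop (by positivity) hinv).atTop_add hH.neg).atTop_mul_atTop₀ hinv

section Derivatives

variable {E F : Type*} [NormedAddCommGroup E] [NormedSpace ℝ E] [NormedAddCommGroup F]
  [NormedSpace ℝ F] {U : Set E} {g : E → F} {x₀ : E}

theorem fderivWithin_closure_eqOn (hU : IsOpen U) :
    EqOn (fderivWithin ℝ g (closure U)) (fderiv ℝ g) U := fun _ hy =>
  fderivWithin_of_mem_nhds (mem_of_superset (hU.mem_nhds hy) subset_closure)

theorem tendsto_fderiv_nhdsWithin_of_contDiffOn_closure (hU : IsOpen U)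
    (hUD : UniqueDiffOn ℝ (closure U)) (hg : ContDiffOn ℝ 1 g (closure U)) (hx₀ : x₀ ∈ closure U)
    (hd : DifferentiableAt ℝ g x₀) :
    Tendsto (fderiv ℝ g) (𝓝[U] x₀) (𝓝 (fderiv ℝ g x₀)) := by
  rw [← hd.fderivWithin (hUD x₀ hx₀)]
  refine ((hg.continuousOn_fderivWithin hUD le_rfl x₀ hx₀).mono subset_closure).tendsto.congr' ?_
  filter_upwards [self_mem_nhdsWithin] with y hy using fderivWithin_closure_eqOn hU hy

theorem tendsto_iteratedFDeriv_nhdsWithin_of_contDiffOn_closure {k : WithTop ℕ∞} {m : ℕ}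
    (hU : IsOpen U) (hUD : UniqueDiffOn ℝ (closure U)) (hg : ContDiffOn ℝ k g (closure U))
    (hm : m ≤ k) (hx₀ : x₀ ∈ closure U) :
    Tendsto (iteratedFDeriv ℝ m g) (𝓝[U] x₀)
      (𝓝 (iteratedFDerivWithin ℝ m g (closure U) x₀)) := by
  refine ((hg.continuousOn_iteratedFDerivWithin hm hUD x₀ hx₀).mono
    subset_closure).tendsto.congr' ?_
  filter_upwards [self_mem_nhdsWithin] with y hy
  rw [← iteratedFDerivWithin_univ]
  exact iteratedFDerivWithin_congr_set
    (eventuallyEq_univ.2 (mem_of_superset (hU.mem_nhds hy) subset_closure)) m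

theorem iteratedFDerivWithin_two_closure_eq (hU : IsOpen U) (hUD : UniqueDiffOn ℝ (closure U))
    (hUx₀ : UniqueDiffWithinAt ℝ U x₀) (hg : ContDiffOn ℝ 2 g (closure U)) (hx₀ : x₀ ∈ closure U)
    (hd : DifferentiableAt ℝ g x₀) (hdd : DifferentiableAt ℝ (fderiv ℝ g) x₀) :
    iteratedFDerivWithin ℝ 2 g (closure U) x₀ = iteratedFDeriv ℝ 2 g x₀ := by
  have hwithin : HasFDerivWithinAt (fderivWithin ℝ g (closure U))
      (fderivWithin ℝ (fderivWithin ℝ g (closure U)) (closure U) x₀) (closure U) x₀ :=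
    ((hg.fderivWithin hUD (m := 1) (by norm_num)).differentiableOn (by norm_num)
      x₀ hx₀).hasFDerivWithinAt
  have hU' : HasFDerivWithinAt (fderiv ℝ g)
      (fderivWithin ℝ (fderivWithin ℝ g (closure U)) (closure U) x₀) U x₀ :=
    (hwithin.mono subset_closure).congr (fun y hy => (fderivWithin_closure_eqOn hU hy).symm)
      (hd.fderivWithin (hUD x₀ hx₀)).symm
  ext v
  rw [iteratedFDerivWithin_two_apply g hUD hx₀, iteratedFDeriv_two_apply,
    hUx₀.eq hU' hdd.hasFDerivAt.hasFDerivWithinAt]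

end Derivatives

section NegLog

variable {E : Type*} [NormedAddCommGroup E] [NormedSpace ℝ E]

theorem iteratedFDeriv_two_neg_log_apply {φ : E → ℝ} {x : E} (hφ : ContDiffAt ℝ 2 φ x)
    (hx : φ x ≠ 0) (u : E) :
    iteratedFDeriv ℝ 2 (fun z => -Real.log (φ z)) x ![u, u]
      = ((fderiv ℝ φ x u) ^ 2 / φ x - iteratedFDeriv ℝ 2 φ x ![u, u]) / φ x := by
  have hfderiv : (fun z => fderiv ℝ (fun w => -Real.log (φ w)) z)
      =ᶠ[𝓝 x] (fun z => (-(φ z)⁻¹) • fderiv ℝ φ z) := by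
    filter_upwards [hφ.eventually (by norm_num), hφ.continuousAt.eventually_ne hx]
      with z hz hz0
    have hlog : HasFDerivAt (fun w => -Real.log (φ w)) (-((φ z)⁻¹ • fderiv ℝ φ z)) z :=
      ((hz.differentiableAt (by norm_num)).hasFDerivAt.log hz0).neg
    rw [hlog.fderiv, neg_smul]
  have hinv : HasFDerivAt (fun z => -(φ z)⁻¹) (((φ x) ^ 2)⁻¹ • fderiv ℝ φ x) x := by
    have h := ((hasDerivAt_inv hx).comp_hasFDerivAt x
      (hφ.differentiableAt (by norm_num)).hasFDerivAt).neg
    simp only [neg_smul, neg_neg] at h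
    exact h
  have hdd : DifferentiableAt ℝ (fderiv ℝ φ) x :=
    (hφ.fderiv_right (m := 1) (by norm_num)).differentiableAt (by norm_num)
  have hsmul : HasFDerivAt (fun z => (-(φ z)⁻¹) • fderiv ℝ φ z)
      ((-(φ x)⁻¹) • fderiv ℝ (fderiv ℝ φ) x
        + (((φ x) ^ 2)⁻¹ • fderiv ℝ φ x).smulRight (fderiv ℝ φ x)) x :=
    hinv.smul hdd.hasFDerivAt
  rw [iteratedFDeriv_two_apply, iteratedFDeriv_two_apply, hfderiv.fderiv_eq, hsmul.fderiv]
  simp only [Matrix.cons_val_zero, Matrix.cons_val_one, add_apply,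
    FunLike.coe_smul, Pi.smul_apply, ContinuousLinearMap.smulRight_apply,
    smul_eq_mul]
  field_simp
  ring

variable {U : Set E} {φ : E → ℝ} {x₀ : E}

theorem tendsto_iteratedFDeriv_two_neg_log_atTop (hU : IsOpen U) (hUD : UniqueDiffOn ℝ (closure U))
    (hUx₀ : UniqueDiffWithinAt ℝ U x₀) (hφ : ContDiffOn ℝ 2 φ (closure U))
    (hpos : ∀ x ∈ U, 0 < φ x) (hx₀ : x₀ ∈ closure U) (hφx₀ : φ x₀ = 0)
    (hd : DifferentiableAt ℝ φ x₀) {u₀ : E}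
    (hstrict : fderiv ℝ φ x₀ u₀ = 0 → iteratedFDeriv ℝ 2 φ x₀ ![u₀, u₀] < 0) :
    Tendsto (fun q : E × E => iteratedFDeriv ℝ 2 (fun z => -Real.log (φ z)) q.1 ![q.2, q.2])
      (𝓝[U] x₀ ×ˢ 𝓝 u₀) atTop := by
  have hy : Tendsto Prod.fst (𝓝[U] x₀ ×ˢ 𝓝 u₀) (𝓝[U] x₀) := tendsto_fst
  have hu : Tendsto Prod.snd (𝓝[U] x₀ ×ˢ 𝓝 u₀) (𝓝 u₀) := tendsto_snd
  have hmem : ∀ᶠ q in 𝓝[U] x₀ ×ˢ 𝓝 u₀, q.1 ∈ U := (eventually_mem_nhdsWithin).prod_inl _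
  have hfderiv : Tendsto (fun q : E × E => fderiv ℝ φ q.1 q.2) (𝓝[U] x₀ ×ˢ 𝓝 u₀)
      (𝓝 (fderiv ℝ φ x₀ u₀)) :=
    (isBoundedBilinearMap_apply.continuous.tendsto _).comp
      (((tendsto_fderiv_nhdsWithin_of_contDiffOn_closure hU hUD
        (hφ.of_le (by norm_num)) hx₀ hd).comp hy).prodMk_nhds hu)
  have hhess : Tendsto (fun q : E × E => iteratedFDeriv ℝ 2 φ q.1 ![q.2, q.2])
      (𝓝[U] x₀ ×ˢ 𝓝 u₀) (𝓝 (iteratedFDerivWithin ℝ 2 φ (closure U) x₀ ![u₀, u₀])) :=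
    ((tendsto_iteratedFDeriv_nhdsWithin_of_contDiffOn_closure hU hUD hφ le_rfl
      hx₀).comp hy).eval (tendsto_pi_nhds.2 fun i => by fin_cases i <;> simpa using hu)
  have hφ0 : Tendsto (fun q : E × E => φ q.1) (𝓝[U] x₀ ×ˢ 𝓝 u₀) (𝓝[>] 0) := by
    refine tendsto_nhdsWithin_iff.2 ⟨?_, hmem.mono fun q hq => hpos q.1 hq⟩
    rw [← hφx₀]
    exact ((hφ.continuousOn x₀ hx₀).mono subset_closure).tendsto.comp hy
  refine (tendsto_sq_div_sub_div_atTop hfderiv hhess hφ0 fun htan => ?_).congr' ?_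
  · have hneg := hstrict htan
    -- otherwise the Hessian at `x₀` would be the junk value `0`
    have hdd : DifferentiableAt ℝ (fderiv ℝ φ) x₀ := by
      by_contra h
      simp [iteratedFDeriv_two_apply, fderiv_zero_of_not_differentiableAt h] at hneg
    simpa [iteratedFDerivWithin_two_closure_eq hU hUD hUx₀ hφ hx₀ hd hdd] using hneg
  · filter_upwards [hmem] with q hq
    exact (iteratedFDeriv_two_neg_log_apply
      (hφ.contDiffAt (mem_of_superset (hU.mem_nhds hq) subset_closure)) (hpos _ hq).ne' _).symm

theorem eventually_forall_sphere_le_iteratedFDeriv_two_neg_log [ProperSpace E] (hU : IsOpen U)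
    (hUD : UniqueDiffOn ℝ (closure U)) (hUx₀ : UniqueDiffWithinAt ℝ U x₀)
    (hφ : ContDiffOn ℝ 2 φ (closure U)) (hpos : ∀ x ∈ U, 0 < φ x) (hx₀ : x₀ ∈ closure U)
    (hφx₀ : φ x₀ = 0) (hd : DifferentiableAt ℝ φ x₀)
    (hstrict : ∀ u : E, u ≠ 0 → fderiv ℝ φ x₀ u = 0 → iteratedFDeriv ℝ 2 φ x₀ ![u, u] < 0)
    (m : ℝ) :
    ∀ᶠ y in 𝓝[U] x₀, ∀ u ∈ sphere (0 : E) 1,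
      m ≤ iteratedFDeriv ℝ 2 (fun z => -Real.log (φ z)) y ![u, u] := by
  have hlocal := (isCompact_sphere (0 : E) 1).mem_prod_nhdsSet_of_forall
    (s := {q | m ≤ iteratedFDeriv ℝ 2 (fun z => -Real.log (φ z)) q.1 ![q.2, q.2]})
    fun u hu => (tendsto_iteratedFDeriv_two_neg_log_atTop hU hUD hUx₀ hφ hpos hx₀ hφx₀ hd
      (hstrict u (ne_zero_of_mem_unit_sphere ⟨u, hu⟩))).eventually_ge_atTop m
  exact (Eventually.curry hlocal).mono fun _ h => h.self_of_nhdsSet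

end NegLog

theorem mul_norm_sub_le_segEf {n : ℕ} {f : EuclideanSpace ℝ (Fin n) → ℝ}
    {x y : EuclideanSpace ℝ (Fin n)} {m : ℝ}
    (hf : ContinuousOn (iteratedFDeriv ℝ 2 f) (segment ℝ x y))
    (hm : ∀ z ∈ segment ℝ x y, ∀ u ∈ sphere (0 : EuclideanSpace ℝ (Fin n)) 1,
      m ≤ iteratedFDeriv ℝ 2 f z ![u, u]) :
    m * ‖y - x‖ ≤ segEf f x y := by
  rcases eq_or_ne x y with rfl | hxy
  · simp [segEf]
  have hr : 0 < ‖y - x‖ := norm_pos_iff.2 (sub_ne_zero.2 hxy.symm)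
  set u := ‖y - x‖⁻¹ • (y - x)
  have hu : u ∈ sphere (0 : EuclideanSpace ℝ (Fin n)) 1 := by
    simp [u, norm_smul, hr.ne']
  have hmaps : MapsTo (fun t : ℝ => x + t • u) (Icc 0 ‖y - x‖) (segment ℝ x y) := by
    intro t ht
    rw [segment_eq_image']
    refine ⟨t / ‖y - x‖, ⟨div_nonneg ht.1 hr.le, div_le_one_of_le₀ ht.2 hr.le⟩, ?_⟩
    simp only [u, smul_smul, div_eq_mul_inv]
  have hint : IntervalIntegrable (fun t : ℝ => iteratedFDeriv ℝ 2 f (x + t • u) ![u, u])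
      MeasureTheory.volume 0 ‖y - x‖ :=
    ((hf.comp (by fun_prop) hmaps).eval continuousOn_const).intervalIntegrable_of_Icc hr.le
  calc m * ‖y - x‖ = ∫ _ in (0 : ℝ)..‖y - x‖, m := by simp [mul_comm]
    _ ≤ segEf f x y := intervalIntegral.integral_mono_on hr.le intervalIntegrable_const hint
          fun t ht => hm _ (hmaps ht) u hu

theorem stmt13_general {n : ℕ} (Ω : Set (EuclideanSpace ℝ (Fin n)))
    (hopen : IsOpen Ω) (hconv : Convex ℝ Ω)
    (φ : EuclideanSpace ℝ (Fin n) → ℝ)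
    (hφC2 : ContDiffOn ℝ 2 φ (closure Ω))
    (hφpos : ∀ x ∈ Ω, 0 < φ x)
    (hφ0 : ∀ x ∈ frontier Ω, φ x = 0)
    (hφν : ∀ x ∈ frontier Ω, fderiv ℝ φ x ≠ 0)
    (hstrict : ∀ x ∈ frontier Ω, ∀ X : EuclideanSpace ℝ (Fin n), X ≠ 0 →
      fderiv ℝ φ x X = 0 → iteratedFDeriv ℝ 2 φ x ![X, X] < 0)
    (xk yk : ℕ → EuclideanSpace ℝ (Fin n))
    (hxk : ∀ k, xk k ∈ Ω) (hyk : ∀ k, yk k ∈ Ω)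
    (x₀ : EuclideanSpace ℝ (Fin n)) (hx₀ : x₀ ∈ frontier Ω)
    (hxlim : Filter.Tendsto xk Filter.atTop (nhds x₀))
    (hylim : Filter.Tendsto yk Filter.atTop (nhds x₀)) :
    0 ≤ Filter.atTop.liminf (fun k => segEf (fun z => -Real.log (φ z)) (xk k) (yk k)) ∧
    ((∀ᶠ k in Filter.atTop, xk k ≠ yk k) →
      Filter.Tendsto
        (fun k => segEf (fun z => -Real.log (φ z)) (xk k) (yk k) / ‖yk k - xk k‖)
        Filter.atTop Filter.atTop) := by
  have hinterior : (interior Ω).Nonempty := by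
    rw [hopen.interior_eq, ← closure_nonempty_iff]
    exact ⟨x₀, hx₀.1⟩
  have hd : DifferentiableAt ℝ φ x₀ := by
    by_contra h
    exact hφν x₀ hx₀ (fderiv_zero_of_not_differentiableAt h)
  have hcont : ContinuousOn (iteratedFDeriv ℝ 2 fun z => -Real.log (φ z)) Ω := by
    have hf : ContDiffOn ℝ 2 (fun z => -Real.log (φ z)) Ω :=
      ((hφC2.mono subset_closure).log fun x hx => (hφpos x hx).ne').neg
    exact (hf.continuousOn_iteratedFDerivWithin le_rfl hopen.uniqueDiffOn).congr
      fun z hz => (iteratedFDerivWithin_of_isOpen 2 hopen hz).symm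
  have hgrowth : ∀ m : ℝ, ∀ᶠ k in atTop,
      m * ‖yk k - xk k‖ ≤ segEf (fun z => -Real.log (φ z)) (xk k) (yk k) := by
    intro m
    obtain ⟨ε, hε, hball⟩ := mem_nhdsWithin_iff.1
      (eventually_forall_sphere_le_iteratedFDeriv_two_neg_log hopen
        (uniqueDiffOn_convex hconv.closure (hinterior.mono (interior_mono subset_closure)))
        (uniqueDiffWithinAt_convex hconv hinterior hx₀.1) hφC2 hφpos hx₀.1 (hφ0 x₀ hx₀) hd
        (hstrict x₀ hx₀) m)
    filter_upwards [hxlim (ball_mem_nhds x₀ hε), hylim (ball_mem_nhds x₀ hε)] with k hx hy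
    have hseg : segment ℝ (xk k) (yk k) ⊆ ball x₀ ε ∩ Ω :=
      ((convex_ball x₀ ε).inter hconv).segment_subset ⟨hx, hxk k⟩ ⟨hy, hyk k⟩
    exact mul_norm_sub_le_segEf (hcont.mono (hseg.trans inter_subset_right))
      fun z hz => hball (hseg hz)
  refine ⟨Real.liminf_nonneg_of_eventually_nonneg ?_, fun hne => tendsto_atTop.2 fun b => ?_⟩
  · filter_upwards [hgrowth 0] with k hk
    simpa using hk
  · filter_upwards [hgrowth b, hne] with k hk hxy
    rwa [le_div_iff₀ (norm_pos_iff.2 (sub_ne_zero.2 hxy.symm))]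

theorem stmt13 {n : ℕ} (Ω : Set (EuclideanSpace ℝ (Fin n)))
    (hopen : IsOpen Ω) (hbd : Bornology.IsBounded Ω) (hconv : Convex ℝ Ω)
    (φ : EuclideanSpace ℝ (Fin n) → ℝ)
    (hφC2 : ContDiffOn ℝ 2 φ (closure Ω))
    (hφpos : ∀ x ∈ Ω, 0 < φ x)
    (hφ0 : ∀ x ∈ frontier Ω, φ x = 0)
    (hφν : ∀ x ∈ frontier Ω, fderiv ℝ φ x ≠ 0)
    (hstrict : ∀ x ∈ frontier Ω, ∀ X : EuclideanSpace ℝ (Fin n), X ≠ 0 →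
      fderiv ℝ φ x X = 0 → iteratedFDeriv ℝ 2 φ x ![X, X] < 0)
    (xk yk : ℕ → EuclideanSpace ℝ (Fin n))
    (hxk : ∀ k, xk k ∈ Ω) (hyk : ∀ k, yk k ∈ Ω)
    (x₀ : EuclideanSpace ℝ (Fin n)) (hx₀ : x₀ ∈ frontier Ω)
    (hxlim : Filter.Tendsto xk Filter.atTop (nhds x₀))
    (hylim : Filter.Tendsto yk Filter.atTop (nhds x₀)) :
    0 ≤ Filter.atTop.liminf (fun k => segEf (fun z => -Real.log (φ z)) (xk k) (yk k)) ∧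
    ((∀ᶠ k in Filter.atTop, xk k ≠ yk k) →
      Filter.Tendsto
        (fun k => segEf (fun z => -Real.log (φ z)) (xk k) (yk k) / ‖yk k - xk k‖)
        Filter.atTop Filter.atTop) :=
  stmt13_general Ω hopen hconv φ hφC2 hφpos hφ0 hφν hstrict xk yk hxk hyk x₀ hx₀ hxlim hylim
end
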